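/- In the 3-node connected Kripke model with nodes a, c below a common top node b, where a forces only atom p, c forces only atom q, and b forces both p and q, every formula θ built from p, q, ⊤ using only ¬, ∨, → satisfies: if b forces θ then a forces θ or c forces θ. -/

import Mathlib

inductive Fm (α : Type) : Type where
  | top  : Fm α
  | atom : α → Fm α
  | neg  : Fm α → Fm α
  | and  : Fm α → Fm α → Fm α
  | or   : Fm α → Fm α → Fm α
  | imp  : Fm α → Fm α → Fm α

structure KripkeModel (α : Type) : Type 1 where
  K : Type
  le : K → K → Prop
  refl : ∀ k, le k k
  trans : ∀ {a b c}, le a b → le b c → le a c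
  antisymm : ∀ {a b}, le a b → le b a → a = b
  val : K → α → Prop
  persist : ∀ {k k' p}, le k k' → val k p → val k' p

def force {α : Type} (M : KripkeModel α) : M.K → Fm α → Prop
  | _, .top => True
  | k, .atom p => M.val k p
  | k, .neg φ => ∀ k', M.le k k' → ¬ force M k' φ
  | k, .and φ ψ => force M k φ ∧ force M k ψ
  | k, .or φ ψ => force M k φ ∨ force M k ψ
  | k, .imp φ ψ => ∀ k', M.le k k' → force M k' φ → force M k' ψ

/-- ∧-free formulas: built using only ¬, ∨, →, ⊤ and atoms. -/
def NoAnd {α : Type} : Fm α → Prop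
  | .top => True
  | .atom _ => True
  | .neg φ => NoAnd φ
  | .and _ _ => False
  | .or φ ψ => NoAnd φ ∧ NoAnd ψ
  | .imp φ ψ => NoAnd φ ∧ NoAnd ψ

/-- The connected 3-node Kripke model with nodes a = 0, b = 1, c = 2; order the
reflexive closure of a ≺ b, c ≺ b; atoms p = 0, q = 1; a ⊩ p, b ⊩ p,q, c ⊩ q. -/
def M11 : KripkeModel (Fin 2) where
  K := Fin 3
  le := fun x y => x = y ∨ (x = 0 ∧ y = 1) ∨ (x = 2 ∧ y = 1)
  refl := by decide
  trans := by decide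
  antisymm := by decide
  val := fun k p => (k = 0 ∧ p = 0) ∨ k = 1 ∨ (k = 2 ∧ p = 1)
  persist := by decide

/-! Every node of `M11` lies below the top node `b`, so a node forces `¬φ` as soon as `b` does
not force `φ`. In the implication case, if `b` forces `ψ` the induction hypothesis puts `ψ`, and
hence `φ → ψ`, at `a` or `c`; otherwise `b` forces neither `ψ` nor `φ`, so `a` forces `¬φ` and
therefore `φ → ψ`. The conjunction `p ∧ q` is the counterexample without the ∧-free restriction. -/

section KripkeModel

variable {α : Type} (M : KripkeModel α)

theorem force_mono {k k' : M.K} (h : M.le k k') {θ : Fm α} (hk : force M k θ) :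
    force M k' θ := by
  induction θ generalizing k k' with
  | top => trivial
  | atom p => exact M.persist h hk
  | neg φ _ => exact fun k'' h' => hk k'' (M.trans h h')
  | and φ ψ ihφ ihψ => exact ⟨ihφ h hk.1, ihψ h hk.2⟩
  | or φ ψ ihφ ihψ => exact hk.imp (ihφ h) (ihψ h)
  | imp φ ψ _ _ => exact fun k'' h' => hk k'' (M.trans h h')

variable {M}

theorem force_imp_of_force {k : M.K} {φ ψ : Fm α} (h : force M k ψ) :
    force M k (.imp φ ψ) :=
  fun _ hk _ => force_mono M hk h

theorem force_imp_of_force_neg {k : M.K} {φ ψ : Fm α} (h : force M k (.neg φ)) :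
    force M k (.imp φ ψ) :=
  fun k' hk hφ => (h k' hk hφ).elim

theorem force_neg_of_not_force_of_cone_le {k b : M.K} (hcone : ∀ k', M.le k k' → M.le k' b)
    {φ : Fm α} (hφ : ¬ force M b φ) : force M k (.neg φ) :=
  fun k' hk hφ' => hφ (force_mono M (hcone k' hk) hφ')

end KripkeModel

theorem M11_le_one : ∀ k : Fin 3, M11.le k (1 : Fin 3) := by
  simp only [M11]
  decide

/-- In the model M11, every ∧-free formula θ in atoms p, q forced at the top
node b is forced at a or at c. -/
theorem no_and_force_down (θ : Fm (Fin 2)) (hθ : NoAnd θ)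
    (hb : force M11 (1 : Fin 3) θ) :
    force M11 (0 : Fin 3) θ ∨ force M11 (2 : Fin 3) θ := by
  have below_b : ∀ k k' : M11.K, M11.le k k' → M11.le k' (1 : Fin 3) := fun _ k' _ => M11_le_one k'
  induction θ with
  | top => exact Or.inl trivial
  | atom p =>
    fin_cases p
    · exact Or.inl (Or.inl ⟨rfl, rfl⟩)
    · exact Or.inr (Or.inr (Or.inr ⟨rfl, rfl⟩))
  | neg φ _ => exact Or.inl (force_neg_of_not_force_of_cone_le (below_b _) (hb _ (M11.refl _)))
  | and _ _ _ _ => exact hθ.elim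
  | or φ ψ ihφ ihψ =>
    rcases hb with hφ | hψ
    · exact (ihφ hθ.1 hφ).imp Or.inl Or.inl
    · exact (ihψ hθ.2 hψ).imp Or.inr Or.inr
  | imp φ ψ _ ihψ =>
    by_cases hψ : force M11 (1 : Fin 3) ψ
    · exact (ihψ hθ.2 hψ).imp force_imp_of_force force_imp_of_force
    · have hφ : ¬ force M11 (1 : Fin 3) φ := fun hφ => hψ (hb _ (M11.refl _) hφ)
      exact Or.inl (force_imp_of_force_neg (force_neg_of_not_force_of_cone_le (below_b _) hφ))
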